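/- Assume p_con ∈ (0,1), γ ≥ 0, H ∈ [0, 3/4] and the admissibility constraints, and define the average consumed shifted fidelity H̄(q) := (q·(1 − p_con)·(b̃ − d̃·H + H·p*) + H·p_con)/(q·(1 − p_con)·(c̃·H − ã + p*) + γ + p_con) for q ∈ [0,1] (so that F̄ = 1/4 + H̄). Then H̄ is non-decreasing on [0,1] if and only if γ·(b̃ − d̃·H + H·p*) + p_con·(b̃ − d̃·H − c̃·H² + ã·H) ≥ 0. -/
import Mathlib


/-- Binomial weight `w_k = (n choose k)·p_gen^k·(1 − p_gen)^(n−k)`. -/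
noncomputable def wgt (n : ℕ) (p : ℝ) (k : ℕ) : ℝ :=
  (n.choose k : ℝ) * p ^ k * (1 - p) ^ (n - k)

/-- Aggregated coefficient, e.g. `ã = Σ_{k=1}^n a_k·w_k`. -/
noncomputable def agg (n : ℕ) (p : ℝ) (f : ℕ → ℝ) : ℝ :=
  ∑ k ∈ Finset.Icc 1 n, f k * wgt n p k

/-- Admissibility constraints on the purification coefficients
`a_k, b_k, c_k, d_k` for `k = 1, …, n`. -/
def Admissible (n : ℕ) (a b c d : ℕ → ℝ) : Prop :=
  ∀ k ∈ Finset.Icc 1 n,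
    (0 ≤ d k ∧ d k ≤ 1) ∧
    (-(4/3) * d k ≤ c k ∧ c k ≤ (4/3) * (1 - d k)) ∧
    (0 ≤ b k ∧ b k ≤ (3/4) * d k) ∧
    (-(4/3) * b k ≤ a k ∧ a k ≤ -(4/3) * b k + (3/4) * c k + d k)

lemma wgt_nonneg (n : ℕ) (p : ℝ) (hp : p ∈ Set.Icc (0:ℝ) 1) (k : ℕ) :
    0 ≤ wgt n p k := by
  have h1 := hp.1
  have h2 : (0:ℝ) ≤ 1 - p := by linarith [hp.2]
  unfold wgt
  positivity

lemma wgt_sum (n : ℕ) (hn : 1 ≤ n) (p : ℝ) :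
    ∑ k ∈ Finset.Icc 1 n, wgt n p k = 1 - (1 - p) ^ n := by
  have h0 : ∑ k ∈ Finset.range (n + 1), wgt n p k = 1 := by
    have he : ∑ k ∈ Finset.range (n + 1), wgt n p k = (p + (1 - p)) ^ n := by
      rw [add_pow]
      apply Finset.sum_congr rfl
      intro k _
      unfold wgt; ring
    rw [he]; norm_num
  rw [Finset.sum_range_succ'] at h0
  have h1 : ∑ k ∈ Finset.Icc 1 n, wgt n p k
      = ∑ k ∈ Finset.range n, wgt n p (k + 1) := by
    rw [show Finset.Icc 1 n = Finset.Ico 1 (n + 1) by rw [Finset.Ico_add_one_right_eq_Icc],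
      Finset.sum_Ico_eq_sum_range]
    simp [add_comm]
  have h2 : wgt n p 0 = (1 - p) ^ n := by
    unfold wgt; simp
  rw [h1]
  rw [h2] at h0
  linarith

/-- With `p_con ∈ (0,1)`, `γ ≥ 0`, `H ∈ [0, 3/4]` and the
admissibility constraints, the average consumed shifted fidelity
`H̄(q) = (q·(1 − p_con)·(b̃ − d̃·H + H·p*) + H·p_con)
        /(q·(1 − p_con)·(c̃·H − ã + p*) + γ + p_con)`
is non-decreasing on `[0,1]` if and only if
`γ·(b̃ − d̃·H + H·p*) + p_con·(b̃ − d̃·H − c̃·H² + ã·H) ≥ 0`. -/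
theorem shifted_fidelity_monotone_iff (n : ℕ) (hn : 1 ≤ n) (p : ℝ)
    (hp : p ∈ Set.Icc (0:ℝ) 1)
    (a b c d : ℕ → ℝ) (hadm : Admissible n a b c d)
    (pcon γ H : ℝ) (hpcon : pcon ∈ Set.Ioo (0:ℝ) 1) (hγ : 0 ≤ γ)
    (hH : H ∈ Set.Icc (0:ℝ) (3/4))
    (P aa bb cc dd : ℝ)
    (hP : P = 1 - (1 - p) ^ n)
    (haa : aa = agg n p a) (hbb : bb = agg n p b)
    (hcc : cc = agg n p c) (hdd : dd = agg n p d)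
    (Hbar : ℝ → ℝ)
    (hHbar : ∀ q, Hbar q =
      (q * (1 - pcon) * (bb - dd * H + H * P) + H * pcon)
      / (q * (1 - pcon) * (cc * H - aa + P) + γ + pcon)) :
    (∀ q₁ q₂ : ℝ, 0 ≤ q₁ → q₁ ≤ q₂ → q₂ ≤ 1 → Hbar q₁ ≤ Hbar q₂) ↔
    0 ≤ γ * (bb - dd * H + H * P) + pcon * (bb - dd * H - cc * H ^ 2 + aa * H) := by
  obtain ⟨hpc0, hpc1⟩ := hpcon
  have h1pc : (0:ℝ) < 1 - pcon := by linarith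
  -- C := cc*H - aa + P is nonnegative
  have hC : 0 ≤ cc * H - aa + P := by
    have heq : cc * H - aa + P
        = ∑ k ∈ Finset.Icc 1 n, (c k * H - a k + 1) * wgt n p k := by
      rw [hcc, haa, hP, ← wgt_sum n hn p, agg, agg, Finset.sum_mul,
        ← Finset.sum_sub_distrib, ← Finset.sum_add_distrib]
      apply Finset.sum_congr rfl
      intro k _
      ring
    rw [heq]
    apply Finset.sum_nonneg
    intro k hk
    obtain ⟨⟨hd1, hd2⟩, ⟨hc1, hc2⟩, ⟨hb1, hb2⟩, ⟨ha1, ha2⟩⟩ := hadm k hk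
    have hterm : 0 ≤ c k * H - a k + 1 := by
      nlinarith [mul_nonneg (sub_nonneg.2 hH.2) (sub_nonneg.2 hc2),
        mul_nonneg (sub_nonneg.2 hd2) hH.1]
    exact mul_nonneg hterm (wgt_nonneg n p hp k)
  -- denominators are positive on [0,1]
  have hden : ∀ q : ℝ, 0 ≤ q →
      0 < q * (1 - pcon) * (cc * H - aa + P) + γ + pcon := by
    intro q hq
    have : 0 ≤ q * (1 - pcon) * (cc * H - aa + P) :=
      mul_nonneg (mul_nonneg hq (le_of_lt h1pc)) hC
    linarith
  constructor
  · intro hmono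
    have h01 := hmono 0 1 le_rfl zero_le_one le_rfl
    rw [hHbar 0, hHbar 1] at h01
    have hd0 := hden 0 le_rfl
    have hd1 := hden 1 zero_le_one
    rw [div_le_div_iff₀ hd0 hd1] at h01
    nlinarith [h01, h1pc]
  · intro hK q₁ q₂ hq₁ hle hq₂
    rw [hHbar q₁, hHbar q₂]
    have hd1 := hden q₁ hq₁
    have hd2 := hden q₂ (le_trans hq₁ hle)
    rw [div_le_div_iff₀ hd1 hd2]
    have hprod : 0 ≤ (q₂ - q₁) * ((1 - pcon) *
        (γ * (bb - dd * H + H * P) + pcon * (bb - dd * H - cc * H ^ 2 + aa * H))) :=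
      mul_nonneg (by linarith) (mul_nonneg (le_of_lt h1pc) hK)
    nlinarith [hprod]
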